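/- Consider the 8-dimensional complex nilpotent Lie algebras L₁₇,₉ with nonzero brackets [e₁,e₃]=e₅, [e₁,e₄]=e₈, [e₁,e₅]=e₇, [e₁,e₆]=e₄, [e₂,e₃]=e₇, [e₃,e₅]=e₈, [e₄,e₆]=e₇, and L₁₇,₁₂ with nonzero brackets [e₁,e₃]=e₅, [e₁,e₄]=e₈, [e₁,e₆]=e₄, [e₂,e₃]=e₇, [e₂,e₆]=e₈, [e₃,e₅]=e₈, [e₄,e₆]=e₇. Then L₁₇,₉ and L₁₇,₁₂ are not isomorphic as Lie algebras. -/
import Mathlib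


open scoped BigOperators

/-- Standard basis vector of `ℂ⁸`. -/
noncomputable def e8 (k : Fin 8) : Fin 8 → ℂ := Pi.single k 1

/-- Upper-triangular part of the structure constants of `L₁₇,₉` (0-indexed:
`[e₁,e₃]=e₅, [e₁,e₄]=e₈, [e₁,e₅]=e₇, [e₁,e₆]=e₄, [e₂,e₃]=e₇, [e₃,e₅]=e₈, [e₄,e₆]=e₇`). -/
noncomputable def f179 (i j : Fin 8) : Fin 8 → ℂ :=
  if i = 0 ∧ j = 2 then e8 4
  else if i = 0 ∧ j = 3 then e8 7
  else if i = 0 ∧ j = 4 then e8 6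
  else if i = 0 ∧ j = 5 then e8 3
  else if i = 1 ∧ j = 2 then e8 6
  else if i = 2 ∧ j = 4 then e8 7
  else if i = 3 ∧ j = 5 then e8 6
  else 0

/-- Upper-triangular part of the structure constants of `L₁₇,₁₂`:
`[e₁,e₃]=e₅, [e₁,e₄]=e₈, [e₁,e₆]=e₄, [e₂,e₃]=e₇, [e₂,e₆]=e₈, [e₃,e₅]=e₈, [e₄,e₆]=e₇`. -/
noncomputable def f1712 (i j : Fin 8) : Fin 8 → ℂ :=
  if i = 0 ∧ j = 2 then e8 4
  else if i = 0 ∧ j = 3 then e8 7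
  else if i = 0 ∧ j = 5 then e8 3
  else if i = 1 ∧ j = 2 then e8 6
  else if i = 1 ∧ j = 5 then e8 7
  else if i = 2 ∧ j = 4 then e8 7
  else if i = 3 ∧ j = 5 then e8 6
  else 0

/-- Antisymmetrized structure constants. -/
noncomputable def c179 (i j : Fin 8) : Fin 8 → ℂ := f179 i j - f179 j i
noncomputable def c1712 (i j : Fin 8) : Fin 8 → ℂ := f1712 i j - f1712 j i

/-- The bracket on `ℂ⁸` determined by structure constants `c`. -/
noncomputable def bracketOf (c : Fin 8 → Fin 8 → Fin 8 → ℂ) (x y : Fin 8 → ℂ) : Fin 8 → ℂ :=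
  ∑ i : Fin 8, ∑ j : Fin 8, (x i * y j) • c i j

-- `L₁₇,₉` bracket in closed form.
set_option maxHeartbeats 1000000 in
lemma br9_eq (x y : Fin 8 → ℂ) : bracketOf c179 x y =
    (x 0 * y 5 - x 5 * y 0) • e8 3 + (x 0 * y 2 - x 2 * y 0) • e8 4
    + (x 0 * y 4 - x 4 * y 0 + (x 1 * y 2 - x 2 * y 1) + (x 3 * y 5 - x 5 * y 3)) • e8 6
    + (x 0 * y 3 - x 3 * y 0 + (x 2 * y 4 - x 4 * y 2)) • e8 7 := by
  have hf : ∀ i j : Fin 8, c179 i j = f179 i j - f179 j i := fun _ _ => rfl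
  funext k
  simp only [bracketOf, Fin.sum_univ_eight, Finset.sum_apply, Pi.smul_apply, smul_eq_mul,
    hf, Pi.sub_apply, f179, Pi.add_apply]
  norm_num
  fin_cases k <;> simp [e8, Pi.single_apply] <;> ring

-- `L₁₇,₁₂` bracket in closed form.
set_option maxHeartbeats 1000000 in
lemma br12_eq (x y : Fin 8 → ℂ) : bracketOf c1712 x y =
    (x 0 * y 5 - x 5 * y 0) • e8 3 + (x 0 * y 2 - x 2 * y 0) • e8 4
    + (x 1 * y 2 - x 2 * y 1 + (x 3 * y 5 - x 5 * y 3)) • e8 6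
    + (x 0 * y 3 - x 3 * y 0 + (x 1 * y 5 - x 5 * y 1) + (x 2 * y 4 - x 4 * y 2)) • e8 7 := by
  have hf : ∀ i j : Fin 8, c1712 i j = f1712 i j - f1712 j i := fun _ _ => rfl
  funext k
  simp only [bracketOf, Fin.sum_univ_eight, Finset.sum_apply, Pi.smul_apply, smul_eq_mul,
    hf, Pi.sub_apply, f1712, Pi.add_apply]
  norm_num
  fin_cases k <;> simp [e8, Pi.single_apply] <;> ring

lemma e8v (k j : Fin 8) : e8 k j = if j = k then 1 else 0 := by
  rw [e8, Pi.single_apply]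

lemma basis_expand (v : Fin 8 → ℂ) : v = ∑ k : Fin 8, v k • e8 k := by
  funext j
  simp [e8, Finset.sum_apply, Pi.single_apply]

set_option maxHeartbeats 4000000 in
/-- The nilpotent Lie algebras `L₁₇,₉` and `L₁₇,₁₂` are not isomorphic:
no linear equivalence of `ℂ⁸` intertwines their brackets. -/
theorem L17_9_not_iso_L17_12 :
    ¬ ∃ g : (Fin 8 → ℂ) ≃ₗ[ℂ] (Fin 8 → ℂ),
        ∀ x y : Fin 8 → ℂ, g (bracketOf c179 x y) = bracketOf c1712 (g x) (g y) := by
  rintro ⟨g, hg⟩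
  have hg' : ∀ x y, g.symm (bracketOf c1712 x y) = bracketOf c179 (g.symm x) (g.symm y) := by
    intro x y
    apply g.injective
    rw [g.apply_symm_apply, hg, g.apply_symm_apply, g.apply_symm_apply]
  -- e7, e8 are central in L17,9 (indices 6,7)
  have hA6c : ∀ w, bracketOf c1712 (g (e8 6)) w = 0 := by
    intro w
    have h := hg (e8 6) (g.symm w)
    rw [g.apply_symm_apply] at h
    rw [← h, br9_eq]
    simp [e8v]
  have hA7c : ∀ w, bracketOf c1712 (g (e8 7)) w = 0 := by
    intro w
    have h := hg (e8 7) (g.symm w)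
    rw [g.apply_symm_apply] at h
    rw [← h, br9_eq]
    simp [e8v]
  -- F2-A : A6, A7 supported in coordinates {6,7}
  have hA6_0 : g (e8 6) 0 = 0 := by
    have h := congrFun (hA6c (e8 5)) 3; rw [br12_eq] at h; simpa [e8v] using h
  have hA6_5 : g (e8 6) 5 = 0 := by
    have h := congrFun (hA6c (e8 0)) 3; rw [br12_eq] at h; simpa [e8v] using h
  have hA6_2 : g (e8 6) 2 = 0 := by
    have h := congrFun (hA6c (e8 0)) 4; rw [br12_eq] at h; simpa [e8v] using h
  have hA6_1 : g (e8 6) 1 = 0 := by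
    have h := congrFun (hA6c (e8 2)) 6; rw [br12_eq] at h; simpa [e8v, hA6_5] using h
  have hA6_3 : g (e8 6) 3 = 0 := by
    have h := congrFun (hA6c (e8 0)) 7; rw [br12_eq] at h; simpa [e8v, hA6_5] using h
  have hA6_4 : g (e8 6) 4 = 0 := by
    have h := congrFun (hA6c (e8 2)) 7; rw [br12_eq] at h; simpa [e8v, hA6_0, hA6_1, hA6_5] using h
  have hA7_0 : g (e8 7) 0 = 0 := by
    have h := congrFun (hA7c (e8 5)) 3; rw [br12_eq] at h; simpa [e8v] using h
  have hA7_5 : g (e8 7) 5 = 0 := by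
    have h := congrFun (hA7c (e8 0)) 3; rw [br12_eq] at h; simpa [e8v] using h
  have hA7_2 : g (e8 7) 2 = 0 := by
    have h := congrFun (hA7c (e8 0)) 4; rw [br12_eq] at h; simpa [e8v] using h
  have hA7_1 : g (e8 7) 1 = 0 := by
    have h := congrFun (hA7c (e8 2)) 6; rw [br12_eq] at h; simpa [e8v, hA7_5] using h
  have hA7_3 : g (e8 7) 3 = 0 := by
    have h := congrFun (hA7c (e8 0)) 7; rw [br12_eq] at h; simpa [e8v, hA7_5] using h
  have hA7_4 : g (e8 7) 4 = 0 := by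
    have h := congrFun (hA7c (e8 2)) 7; rw [br12_eq] at h; simpa [e8v, hA7_0, hA7_1, hA7_5] using h
  -- F1-A : A3 = g e4 and A4 = g e5 lie in L² (coords 3,4,6,7)
  have hA3eq : g (e8 3) = bracketOf c1712 (g (e8 0)) (g (e8 5)) := by
    have h := hg (e8 0) (e8 5)
    rwa [show bracketOf c179 (e8 0) (e8 5) = e8 3 by rw [br9_eq]; simp [e8v]] at h
  have hA4eq : g (e8 4) = bracketOf c1712 (g (e8 0)) (g (e8 2)) := by
    have h := hg (e8 0) (e8 2)
    rwa [show bracketOf c179 (e8 0) (e8 2) = e8 4 by rw [br9_eq]; simp [e8v]] at h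
  have hA3_0 : g (e8 3) 0 = 0 := by rw [hA3eq, br12_eq]; simp [e8v]
  have hA3_1 : g (e8 3) 1 = 0 := by rw [hA3eq, br12_eq]; simp [e8v]
  have hA3_2 : g (e8 3) 2 = 0 := by rw [hA3eq, br12_eq]; simp [e8v]
  have hA3_5 : g (e8 3) 5 = 0 := by rw [hA3eq, br12_eq]; simp [e8v]
  have hA4_0 : g (e8 4) 0 = 0 := by rw [hA4eq, br12_eq]; simp [e8v]
  have hA4_1 : g (e8 4) 1 = 0 := by rw [hA4eq, br12_eq]; simp [e8v]
  have hA4_2 : g (e8 4) 2 = 0 := by rw [hA4eq, br12_eq]; simp [e8v]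
  have hA4_5 : g (e8 4) 5 = 0 := by rw [hA4eq, br12_eq]; simp [e8v]
  -- F3-A : A1 = g e2 in Z₂ (coords 1,3,4,6,7)
  have hA1c : ∀ w, bracketOf c1712 (g (e8 1)) w = g.symm w 2 • g (e8 6) := by
    intro w
    have h := hg (e8 1) (g.symm w)
    rw [g.apply_symm_apply] at h
    rw [← h, br9_eq]
    simp [e8v]
  have hA1_0 : g (e8 1) 0 = 0 := by
    have h := congrFun (hA1c (e8 5)) 3; rw [br12_eq] at h; simpa [e8v, hA6_3] using h
  have hA1_5 : g (e8 1) 5 = 0 := by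
    have h := congrFun (hA1c (e8 0)) 3; rw [br12_eq] at h; simpa [e8v, hA6_3] using h
  have hA1_2 : g (e8 1) 2 = 0 := by
    have h := congrFun (hA1c (e8 0)) 4; rw [br12_eq] at h; simpa [e8v, hA6_4] using h
  -- F4-A : A2 = g e3 and A5 = g e6 in M (coord 0 vanishes)
  have hA2c : ∀ w, bracketOf c1712 (g (e8 2)) w
      = (-(g.symm w 0)) • g (e8 4) + ((-(g.symm w 1)) • g (e8 6) + g.symm w 4 • g (e8 7)) := by
    intro w
    have h := hg (e8 2) (g.symm w)
    rw [g.apply_symm_apply] at h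
    rw [← h, br9_eq]
    simp [e8v, map_add, map_smul]
    try module
  have hA2_0 : g (e8 2) 0 = 0 := by
    have t1 := congrFun (hA2c (e8 5)) 3; rw [br12_eq] at t1
    simp [e8v, hA6_3, hA7_3] at t1
    have t3 := congrFun (hA2c (e8 2)) 3; rw [br12_eq] at t3
    simp [e8v, hA6_3, hA7_3] at t3
    have t4 := congrFun (hA2c (e8 2)) 4; rw [br12_eq] at t4
    simp [e8v, hA6_4, hA7_4] at t4
    rcases t3 with h | h
    · rw [t4, h, zero_mul, neg_zero]
    · rw [t1, h, mul_zero, neg_zero]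
  have hA5c : ∀ w, bracketOf c1712 (g (e8 5)) w
      = (-(g.symm w 0)) • g (e8 3) + (-(g.symm w 3)) • g (e8 6) := by
    intro w
    have h := hg (e8 5) (g.symm w)
    rw [g.apply_symm_apply] at h
    rw [← h, br9_eq]
    simp [e8v, map_add, map_smul]
    try module
  have hA5_0 : g (e8 5) 0 = 0 := by
    have t1 := congrFun (hA5c (e8 5)) 3; rw [br12_eq] at t1
    simp [e8v, hA6_3] at t1
    have t3 := congrFun (hA5c (e8 2)) 3; rw [br12_eq] at t3
    simp [e8v, hA6_3] at t3
    have t4 := congrFun (hA5c (e8 2)) 4; rw [br12_eq] at t4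
    simp [e8v, hA6_4] at t4
    rcases t3 with h | h
    · rw [t4, h, zero_mul, neg_zero]
    · rw [t1, h, mul_zero, neg_zero]
  -- B-side: the same facts for g.symm
  have hB6c : ∀ w, bracketOf c179 (g.symm (e8 6)) w = 0 := by
    intro w
    have h := hg' (e8 6) (g w)
    rw [g.symm_apply_apply] at h
    rw [← h, br12_eq]
    simp [e8v]
  have hB7c : ∀ w, bracketOf c179 (g.symm (e8 7)) w = 0 := by
    intro w
    have h := hg' (e8 7) (g w)
    rw [g.symm_apply_apply] at h
    rw [← h, br12_eq]
    simp [e8v]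
  have hB6_3 : g.symm (e8 6) 3 = 0 := by
    have h := congrFun (hB6c (e8 0)) 7; rw [br9_eq] at h; simpa [e8v] using h
  have hB6_4 : g.symm (e8 6) 4 = 0 := by
    have h := congrFun (hB6c (e8 2)) 7; rw [br9_eq] at h; simpa [e8v] using h
  have hB7_3 : g.symm (e8 7) 3 = 0 := by
    have h := congrFun (hB7c (e8 0)) 7; rw [br9_eq] at h; simpa [e8v] using h
  have hB7_4 : g.symm (e8 7) 4 = 0 := by
    have h := congrFun (hB7c (e8 2)) 7; rw [br9_eq] at h; simpa [e8v] using h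
  have hB1c : ∀ w, bracketOf c179 (g.symm (e8 1)) w
      = g w 2 • g.symm (e8 6) + g w 5 • g.symm (e8 7) := by
    intro w
    have h := hg' (e8 1) (g w)
    rw [g.symm_apply_apply] at h
    rw [← h, br12_eq]
    simp [e8v, map_add, map_smul]
    try module
  have hB1_0 : g.symm (e8 1) 0 = 0 := by
    have h := congrFun (hB1c (e8 5)) 3; rw [br9_eq] at h
    simpa [e8v, hB6_3, hB7_3] using h
  have hB1_5 : g.symm (e8 1) 5 = 0 := by
    have h := congrFun (hB1c (e8 0)) 3; rw [br9_eq] at h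
    simpa [e8v, hB6_3, hB7_3] using h
  have hB1_2 : g.symm (e8 1) 2 = 0 := by
    have h := congrFun (hB1c (e8 0)) 4; rw [br9_eq] at h
    simpa [e8v, hB6_4, hB7_4] using h
  have hB2c : ∀ w, bracketOf c179 (g.symm (e8 2)) w
      = (-(g w 0)) • g.symm (e8 4) + ((-(g w 1)) • g.symm (e8 6) + g w 4 • g.symm (e8 7)) := by
    intro w
    have h := hg' (e8 2) (g w)
    rw [g.symm_apply_apply] at h
    rw [← h, br12_eq]
    simp [e8v, map_add, map_smul]
    try module
  have hB2_0 : g.symm (e8 2) 0 = 0 := by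
    have t1 := congrFun (hB2c (e8 5)) 3; rw [br9_eq] at t1
    simp [e8v, hB6_3, hB7_3] at t1
    have t3 := congrFun (hB2c (e8 2)) 3; rw [br9_eq] at t3
    simp [e8v, hB6_3, hB7_3] at t3
    have t4 := congrFun (hB2c (e8 2)) 4; rw [br9_eq] at t4
    simp [e8v, hB6_4, hB7_4] at t4
    rcases t3 with h | h
    · rw [t4, h, zero_mul, neg_zero]
    · rw [t1, h, mul_zero, neg_zero]
  have hB5c : ∀ w, bracketOf c179 (g.symm (e8 5)) w
      = (-(g w 0)) • g.symm (e8 3) + ((-(g w 3)) • g.symm (e8 6) + (-(g w 1)) • g.symm (e8 7)) := by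
    intro w
    have h := hg' (e8 5) (g w)
    rw [g.symm_apply_apply] at h
    rw [← h, br12_eq]
    simp [e8v, map_add, map_smul]
    try module
  have hB5_0 : g.symm (e8 5) 0 = 0 := by
    have t1 := congrFun (hB5c (e8 5)) 3; rw [br9_eq] at t1
    simp [e8v, hB6_3, hB7_3] at t1
    have t3 := congrFun (hB5c (e8 2)) 3; rw [br9_eq] at t3
    simp [e8v, hB6_3, hB7_3] at t3
    have t4 := congrFun (hB5c (e8 2)) 4; rw [br9_eq] at t4
    simp [e8v, hB6_4, hB7_4] at t4
    rcases t3 with h | h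
    · rw [t4, h, zero_mul, neg_zero]
    · rw [t1, h, mul_zero, neg_zero]
  -- expansion of basis vectors over the images g (e8 k)
  have gB : ∀ i : Fin 8, e8 i = ∑ k : Fin 8, g.symm (e8 i) k • g (e8 k) := by
    intro i
    calc e8 i = g (g.symm (e8 i)) := (g.apply_symm_apply _).symm
    _ = g (∑ k : Fin 8, g.symm (e8 i) k • e8 k) := by rw [← basis_expand (g.symm (e8 i))]
    _ = ∑ k : Fin 8, g.symm (e8 i) k • g (e8 k) := by rw [map_sum]; simp only [map_smul]
  -- invertibility facts
  have h_a := congrFun (gB 0) 0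
  simp [Fin.sum_univ_eight, e8v, hA1_0, hA2_0, hA3_0, hA4_0, hA5_0, hA6_0, hA7_0] at h_a
  have h_p := congrFun (gB 1) 1
  simp [Fin.sum_univ_eight, e8v, hB1_0, hB1_2, hB1_5, hA3_1, hA4_1, hA6_1, hA7_1] at h_p
  have hdet1 := congrFun (gB 2) 2
  simp [Fin.sum_univ_eight, e8v, hB2_0, hA1_2, hA3_2, hA4_2, hA6_2, hA7_2] at hdet1
  have hdet2 := congrFun (gB 2) 5
  simp [Fin.sum_univ_eight, e8v, hB2_0, hA1_5, hA3_5, hA4_5, hA6_5, hA7_5] at hdet2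
  have hdet3 := congrFun (gB 5) 2
  simp [Fin.sum_univ_eight, e8v, hB5_0, hA1_2, hA3_2, hA4_2, hA6_2, hA7_2] at hdet3
  have hdet4 := congrFun (gB 5) 5
  simp [Fin.sum_univ_eight, e8v, hB5_0, hA1_5, hA3_5, hA4_5, hA6_5, hA7_5] at hdet4
  have ha0 : g (e8 0) 0 ≠ 0 := fun h0 => by simp [h0] at h_a
  -- main structural equations
  have hA43 : g (e8 4) 3 = g (e8 0) 0 * g (e8 2) 5 := by
    rw [hA4eq, br12_eq]; simp [e8v, hA2_0]
  have hA33 : g (e8 3) 3 = g (e8 0) 0 * g (e8 5) 5 := by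
    rw [hA3eq, br12_eq]; simp [e8v, hA5_0]
  have hA34 : g (e8 3) 4 = g (e8 0) 0 * g (e8 5) 2 := by
    rw [hA3eq, br12_eq]; simp [e8v, hA5_0]
  have h23 := hg (e8 2) (e8 3)
  rw [show bracketOf c179 (e8 2) (e8 3) = 0 by rw [br9_eq]; simp [e8v], map_zero, br12_eq] at h23
  have hE3a := congrFun h23.symm 6
  simp [e8v, hA3_1, hA3_2, hA3_5] at hE3a
  have hE3b := congrFun h23.symm 7
  simp [e8v, hA2_0, hA3_0, hA3_1, hA3_2, hA3_5] at hE3b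
  have h35 := hg (e8 3) (e8 5)
  rw [show bracketOf c179 (e8 3) (e8 5) = e8 6 by rw [br9_eq]; simp [e8v], br12_eq] at h35
  have halpha1 := congrFun h35 6
  simp [e8v, hA3_1, hA3_2, hA3_5] at halpha1
  have h12 := hg (e8 1) (e8 2)
  rw [show bracketOf c179 (e8 1) (e8 2) = e8 6 by rw [br9_eq]; simp [e8v], br12_eq] at h12
  have halpha2 := congrFun h12 6
  simp [e8v, hA1_2, hA1_5] at halpha2
  have h04 := hg (e8 0) (e8 4)
  rw [show bracketOf c179 (e8 0) (e8 4) = e8 6 by rw [br9_eq]; simp [e8v], br12_eq] at h04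
  have halpha3 := congrFun h04 6
  simp [e8v, hA4_1, hA4_2, hA4_5] at halpha3
  have h15 := hg (e8 1) (e8 5)
  rw [show bracketOf c179 (e8 1) (e8 5) = 0 by rw [br9_eq]; simp [e8v], map_zero, br12_eq] at h15
  have hE6 := congrFun h15.symm 6
  simp [e8v, hA1_2, hA1_5] at hE6
  -- endgame: d = g(e3)₂, e = g(e3)₅, f = g(e6)₂, g' = g(e6)₅
  rcases hE3b with hd | hf4
  · -- case d = 0
    rw [hd] at hdet1 hdet3
    simp at hdet1 hdet3
    have hf0 : g (e8 5) 2 ≠ 0 := fun h0 => by simp [h0] at hdet1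
    have hB55 : g.symm (e8 5) 5 = 0 := by
      rcases hdet3 with h | h
      · exact h
      · exact absurd h hf0
    rw [hB55] at hdet4
    simp at hdet4
    have he0 : g (e8 2) 5 ≠ 0 := fun h0 => by simp [h0] at hdet4
    have hA330 : g (e8 3) 3 = 0 := by
      rcases hE3a with h | h
      · exact absurd h he0
      · exact h
    rw [hA330, zero_mul] at halpha1
    have hq0 : g (e8 1) 3 * g (e8 2) 5 = 0 := by
      linear_combination -halpha2 + halpha1 - g (e8 1) 1 * hd
    have hq : g (e8 1) 3 = 0 := (mul_eq_zero.mp hq0).resolve_right he0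
    have hp0 : g (e8 1) 1 * g (e8 5) 2 = 0 := by
      linear_combination hE6 - g (e8 5) 5 * hq
    have hp1 : g (e8 1) 1 = 0 := (mul_eq_zero.mp hp0).resolve_right hf0
    rw [hp1] at h_p
    simp at h_p
  · -- case f = 0
    have hf0 : g (e8 5) 2 = 0 := by
      have h' := hA34
      rw [hf4] at h'
      rcases mul_eq_zero.mp h'.symm with h | h
      · exact absurd h ha0
      · exact h
    rw [hf0] at hdet1 hdet3
    simp at hdet1 hdet3
    have hd0 : g (e8 2) 2 ≠ 0 := fun h0 => by simp [h0] at hdet1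
    have hB52 : g.symm (e8 5) 2 = 0 := by
      rcases hdet3 with h | h
      · exact h
      · exact absurd h hd0
    rw [hB52] at hdet4
    simp at hdet4
    have hg0 : g (e8 5) 5 ≠ 0 := fun h0 => by simp [h0] at hdet4
    have hA33ne : g (e8 3) 3 ≠ 0 := by
      rw [hA33]; exact mul_ne_zero ha0 hg0
    have he0 : g (e8 2) 5 = 0 := by
      rcases hE3a with h | h
      · exact h
      · exact absurd h hA33ne
    have hA430 : g (e8 4) 3 = 0 := by rw [hA43, he0, mul_zero]
    rw [hA430, mul_zero, neg_zero] at halpha3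
    have hcontra : g (e8 3) 3 * g (e8 5) 5 = 0 := by rw [← halpha1, halpha3]
    exact absurd hcontra (mul_ne_zero hA33ne hg0)
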